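/- arXiv:2006.04188 — 3 statements merged into one kernel-verified Lean document; each statement's English description precedes it below -/
import Mathlib

section
/- Let V ~ E(μ, Γ) be an elliptical random element in a separable Hilbert space H with finite second moments, where Γ is the (Hilbert–Schmidt) covariance operator with eigenvalues λ₁ ≥ λ₂ ≥ ... and orthonormal eigenfunctions φ₁, φ₂, .... Fix d with λ_d > 0 and let T_d : H → R^d, T_d(x) = (⟨x,φ₁⟩,...,⟨x,φ_d⟩), W₁ = T_d V, and V₂ the orthogonal projection of V onto span{φ₁,...,φ_d}^⊥. Then (a) the covariance matrix of W₁ equals diag(λ₁,...,λ_d) and is nonsingular, and (b) E(V₂ | W₁) = μ₂ + Γ_{V₂,W₁} Σ_{W₁}^{-1} (W₁ − μ₁), where Γ_{V₂,W₁} is the cross-covariance operator between V₂ and W₁, μ₁ = E(W₁), μ₂ = E(V₂). -/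
open MeasureTheory ProbabilityTheory
open scoped RealInnerProductSpace

noncomputable section

variable {Ω : Type*} [MeasurableSpace Ω]

/-- `V` is an elliptical random element with location `μ0` and scatter operator `Γ`:
there is a characteristic generator `φ` such that every bounded linear image `B V` into a
Euclidean space has characteristic function `t ↦ φ (⟪t, B Γ B* t⟫)` after centering at `B μ0`. -/
def IsElliptical {H : Type*} [NormedAddCommGroup H] [InnerProductSpace ℝ H] [CompleteSpace H]
    (P : Measure Ω) (V : Ω → H) (μ0 : H) (Γ : H →L[ℝ] H) : Prop :=
  ∃ φ : ℝ → ℂ, ∀ (d : ℕ) (B : H →L[ℝ] EuclideanSpace ℝ (Fin d))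
    (t : EuclideanSpace ℝ (Fin d)),
    (∫ ω, Complex.exp (Complex.I * ((⟪t, B (V ω) - B μ0⟫ : ℝ) : ℂ)) ∂P)
      = φ (⟪t, (B ∘L Γ ∘L (ContinuousLinearMap.adjoint B)) t⟫ : ℝ)

/-- `G` is the covariance operator of `V`: `⟪G u, v⟫ = Cov(⟪u, V⟫, ⟪v, V⟫)`. -/
def IsCovOp {H : Type*} [NormedAddCommGroup H] [InnerProductSpace ℝ H]
    (P : Measure Ω) (V : Ω → H) (G : H →L[ℝ] H) : Prop :=
  ∀ u v : H, (⟪G u, v⟫ : ℝ) =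
    ∫ ω, ((⟪u, V ω⟫ : ℝ) - ∫ ω', (⟪u, V ω'⟫ : ℝ) ∂P)
        * ((⟪v, V ω⟫ : ℝ) - ∫ ω', (⟪v, V ω'⟫ : ℝ) ∂P) ∂P

/-- Domain of attraction of `y j` among the points `y 0, …, y (k-1)`, with ties assigned
to the lowest index. -/
def attractionDomain {H : Type*} [NormedAddCommGroup H] {k : ℕ}
    (y : Fin k → H) (j : Fin k) : Set H :=
  {x | (∀ ℓ, ‖x - y j‖ ≤ ‖x - y ℓ‖) ∧ ∀ ℓ, ℓ < j → ‖x - y j‖ < ‖x - y ℓ‖}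

/-- The points `y 0, …, y (k-1)` are self-consistent for `V`:
`E(V | V ∈ D_j) = y j` for each domain of attraction `D_j`. -/
def SelfConsistent {H : Type*} [NormedAddCommGroup H] [NormedSpace ℝ H] {k : ℕ}
    (P : Measure Ω) (V : Ω → H) (y : Fin k → H) : Prop :=
  ∀ j, ∫ ω in V ⁻¹' attractionDomain y j, V ω ∂P
        = (P (V ⁻¹' attractionDomain y j)).toReal • y j

/-- The points `y 0, …, y (k-1)` are principal points of `V`: they minimize the expected
squared distance to the nearest of `k` points. -/
def IsPrincipal {H : Type*} [NormedAddCommGroup H] {k : ℕ}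
    (P : Measure Ω) (V : Ω → H) (y : Fin k → H) : Prop :=
  ∀ z : Fin k → H,
    (∫ ω, (⨅ j, ‖V ω - y j‖) ^ 2 ∂P) ≤ ∫ ω, (⨅ j, ‖V ω - z j‖) ^ 2 ∂P

/-! For `u` orthogonal to `φ₁, …, φ_d`, the eigenvector relations kill the cross terms of the
scatter operator between `T_d` and `⟪u, ·⟫`. Ellipticity then makes the law of
`(T_d V, ⟪u, V - μ0⟫)` invariant under `(w, z) ↦ (w, -z)`, as characteristic functions determine
laws, so `⟪u, V - μ0⟫` integrates to zero over every event of `σ(W₁)`; that is, `E(V₂ | W₁) = μ₂`.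
The same eigenvector relations make `V₂` and `W₁` uncorrelated, so `Γ_{V₂,W₁} = 0` and the
right-hand side is `μ₂` too. -/

section Coordinates

variable {H : Type*} [NormedAddCommGroup H] [InnerProductSpace ℝ H] {ι : Type*}

def coordCLM (b : ι → H) : H →L[ℝ] EuclideanSpace ℝ ι :=
  (EuclideanSpace.equiv ι ℝ).symm.toContinuousLinearMap ∘L
    ContinuousLinearMap.pi fun j => innerSL ℝ (b j)

@[simp] lemma coordCLM_apply (b : ι → H) (x : H) (j : ι) : coordCLM b x j = ⟪b j, x⟫ := rfl

lemma adjoint_coordCLM_apply [Fintype ι] [CompleteSpace H] (b : ι → H) (t : EuclideanSpace ℝ ι) :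
    (coordCLM b).adjoint t = ∑ j, t j • b j := by
  refine ext_inner_right ℝ fun y => ?_
  simp [ContinuousLinearMap.adjoint_inner_left, sum_inner, PiLp.inner_apply, real_inner_smul_left,
    mul_comm]

lemma coordCLM_comp_comp_adjoint_apply [Fintype ι] [CompleteSpace H] (b : ι → H) (Γ : H →L[ℝ] H)
    (t : EuclideanSpace ℝ ι) (j : ι) :
    (coordCLM b ∘L Γ ∘L (coordCLM b).adjoint) t j = ∑ k, t k * ⟪b j, Γ (b k)⟫ := by
  simp [adjoint_coordCLM_apply]

lemma coordCLM_comp_comp_adjoint_congr [Fintype ι] [CompleteSpace H] {b b' : ι → H}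
    {Γ : H →L[ℝ] H} (h : ∀ j k, ⟪b j, Γ (b k)⟫ = ⟪b' j, Γ (b' k)⟫) :
    coordCLM b ∘L Γ ∘L (coordCLM b).adjoint = coordCLM b' ∘L Γ ∘L (coordCLM b').adjoint := by
  ext1 t
  ext j
  simp only [coordCLM_comp_comp_adjoint_apply, h]

def coordResidual [Fintype ι] (b : ι → H) (y : H) : H := y - ∑ i, ⟪b i, y⟫ • b i

lemma inner_coordResidual_comm [Fintype ι] (b : ι → H) (c y : H) :
    ⟪c, coordResidual b y⟫ = ⟪coordResidual b c, y⟫ := by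
  simp only [coordResidual, inner_sub_right, inner_sub_left, inner_sum, sum_inner,
    real_inner_smul_right, real_inner_smul_left, real_inner_comm c, mul_comm]

lemma Orthonormal.inner_coordResidual [Fintype ι] {b : ι → H} (hb : Orthonormal ℝ b) (j : ι)
    (y : H) : ⟪b j, coordResidual b y⟫ = 0 := by
  classical
  rw [coordResidual, inner_sub_right, hb.inner_right_fintype, sub_self]

end Coordinates

theorem setIntegral_preimage_eq_zero_of_map_eq_neg {α : Type*} [MeasurableSpace α]
    {P : Measure Ω} {Y : Ω → α} {Z : Ω → ℝ} (hY : Measurable Y) (hZ : Measurable Z)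
    (hsymm : P.map (fun ω => (Y ω, Z ω)) = P.map (fun ω => (Y ω, -Z ω)))
    {S : Set α} (hS : MeasurableSet S) :
    ∫ ω in Y ⁻¹' S, Z ω ∂P = 0 := by
  set F : α × ℝ → ℝ := (S ×ˢ Set.univ).indicator Prod.snd
  have hF : StronglyMeasurable F := (measurable_snd.indicator (hS.prod .univ)).stronglyMeasurable
  have hFZ : ∀ ω, F (Y ω, Z ω) = (Y ⁻¹' S).indicator Z ω := fun ω => by
    by_cases h : Y ω ∈ S <;> simp [F, h]
  have hFnegZ : ∀ ω, F (Y ω, -Z ω) = -(Y ⁻¹' S).indicator Z ω := fun ω => by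
    by_cases h : Y ω ∈ S <;> simp [F, h]
  have hflip : ∫ ω, F (Y ω, Z ω) ∂P = ∫ ω, F (Y ω, -Z ω) ∂P := by
    rw [← integral_map (hY.prodMk hZ).aemeasurable hF.aestronglyMeasurable,
      ← integral_map (hY.prodMk (g := fun ω => -Z ω) hZ.neg).aemeasurable hF.aestronglyMeasurable,
      hsymm]
  simp only [hFZ, hFnegZ, integral_neg] at hflip
  rw [← integral_indicator (hY hS)]
  linarith

section Elliptical

variable {H : Type*} [NormedAddCommGroup H] [InnerProductSpace ℝ H] [CompleteSpace H]
  [MeasurableSpace H] [BorelSpace H] {P : Measure Ω} [IsProbabilityMeasure P]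
  {V : Ω → H} {μ0 : H} {Γ : H →L[ℝ] H}

theorem IsElliptical.map_eq_of_comp_adjoint_eq (hV : IsElliptical P V μ0 Γ)
    (hVm : AEMeasurable V P) {m : ℕ} {B B' : H →L[ℝ] EuclideanSpace ℝ (Fin m)}
    (hBB' : B ∘L Γ ∘L B.adjoint = B' ∘L Γ ∘L B'.adjoint) :
    P.map (fun ω => B (V ω) - B μ0) = P.map (fun ω => B' (V ω) - B' μ0) := by
  obtain ⟨ψ, hψ⟩ := hV
  have hcharFun (A : H →L[ℝ] EuclideanSpace ℝ (Fin m)) (t : EuclideanSpace ℝ (Fin m)) :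
      charFun (P.map fun ω => A (V ω) - A μ0) t = ψ ⟪t, (A ∘L Γ ∘L A.adjoint) t⟫ := by
    have hAm : AEMeasurable (fun ω => A (V ω) - A μ0) P :=
      (A.continuous.measurable.comp_aemeasurable hVm).sub_const _
    rw [charFun_apply, integral_map hAm (by fun_prop), ← hψ]
    simp_rw [real_inner_comm t, mul_comm]
  have := Measure.isProbabilityMeasure_map (μ := P)
    ((B.continuous.measurable.comp_aemeasurable hVm).sub_const (B μ0))
  have := Measure.isProbabilityMeasure_map (μ := P)
    ((B'.continuous.measurable.comp_aemeasurable hVm).sub_const (B' μ0))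
  exact Measure.ext_of_charFun (funext fun t => by rw [hcharFun, hcharFun, hBB'])

theorem IsElliptical.setIntegral_inner_sub_eq_zero (hV : IsElliptical P V μ0 Γ)
    (hVm : Measurable V) {m : ℕ} (b : Fin m → H) {u : H}
    (hbu : ∀ i, ⟪b i, Γ u⟫ = 0) (hub : ∀ i, ⟪u, Γ (b i)⟫ = 0)
    {S : Set (EuclideanSpace ℝ (Fin m))} (hS : MeasurableSet S) :
    ∫ ω in (fun ω => coordCLM b (V ω)) ⁻¹' S, (⟪u, V ω⟫ - ⟪u, μ0⟫) ∂P = 0 := by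
  let bp : Fin (m + 1) → H := Fin.snoc b u
  let bn : Fin (m + 1) → H := Fin.snoc b (-u)
  have hscatter (j k : Fin (m + 1)) : ⟪bp j, Γ (bp k)⟫ = ⟪bn j, Γ (bn k)⟫ := by
    induction j using Fin.lastCases <;> induction k using Fin.lastCases <;>
      simp [bp, bn, hbu, hub]
  have hlaw := hV.map_eq_of_comp_adjoint_eq hVm.aemeasurable
    (coordCLM_comp_comp_adjoint_congr hscatter)
  set π : EuclideanSpace ℝ (Fin (m + 1)) → EuclideanSpace ℝ (Fin m) × ℝ := fun x =>
    (WithLp.toLp 2 (fun i => x (Fin.castSucc i)) + coordCLM b μ0, x (Fin.last m))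
  have hπ : Measurable π := by fun_prop
  have hX (c : Fin (m + 1) → H) :
      Measurable fun ω => coordCLM c (V ω) - coordCLM c μ0 :=
    (coordCLM c).continuous.measurable.comp hVm |>.sub_const (coordCLM c μ0)
  refine setIntegral_preimage_eq_zero_of_map_eq_neg ((coordCLM b).continuous.measurable.comp hVm)
    (((innerSL ℝ u).continuous.measurable.comp hVm).sub_const _) ?_ hS
  convert congrArg (Measure.map π) hlaw using 1 <;> rw [Measure.map_map hπ (hX _)] <;>
    congr 1 <;> ext ω <;> simp [π, bp, bn, neg_add_eq_sub]

theorem IsElliptical.condExp_coordResidual_ae_eq (hV : IsElliptical P V μ0 Γ)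
    (hVm : Measurable V) (hint : Integrable V P) (hΓ : (Γ : H →ₗ[ℝ] H).IsSymmetric)
    {m : ℕ} {b : Fin m → H} (hb : Orthonormal ℝ b) {lam : Fin m → ℝ}
    (heig : ∀ i, Γ (b i) = lam i • b i) :
    P[fun ω => coordResidual b (V ω) | MeasurableSpace.comap (fun ω => coordCLM b (V ω)) inferInstance]
      =ᵐ[P] fun _ => coordResidual b μ0 := by
  have hW : Measurable fun ω => coordCLM b (V ω) := (coordCLM b).continuous.measurable.comp hVm
  have hinner (c : H) : Integrable (fun ω => ⟪c, V ω⟫) P := (innerSL ℝ c).integrable_comp hint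
  have hres : Integrable (fun ω => coordResidual b (V ω)) P :=
    hint.sub (integrable_finsetSum _ fun i _ => (hinner (b i)).smul_const (b i))
  refine (ae_eq_condExp_of_forall_setIntegral_eq hW.comap_le hres
    (fun _ _ _ => integrableOn_const (by finiteness)) ?_ aestronglyMeasurable_const).symm
  rintro _ ⟨S, hS, rfl⟩ -
  refine ext_inner_left ℝ fun c => ?_
  set u := coordResidual b c
  have hbu (i : Fin m) : ⟪b i, Γ u⟫ = 0 := by
    rw [← ContinuousLinearMap.coe_coe, ← hΓ, ContinuousLinearMap.coe_coe, heig,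
      real_inner_smul_left, hb.inner_coordResidual, mul_zero]
  have hub (i : Fin m) : ⟪u, Γ (b i)⟫ = 0 := by
    rw [← ContinuousLinearMap.coe_coe, ← hΓ, ContinuousLinearMap.coe_coe, real_inner_comm, hbu]
  have hsymm := hV.setIntegral_inner_sub_eq_zero hVm b hbu hub hS
  rw [integral_sub (hinner u).integrableOn (integrableOn_const (by finiteness)),
    sub_eq_zero] at hsymm
  simp only [← integral_inner (integrable_const _).integrableOn, ← integral_inner hres.integrableOn,
    inner_coordResidual_comm b c]
  exact hsymm.symm

end Elliptical

section Covariance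

variable {H : Type*} [NormedAddCommGroup H] [InnerProductSpace ℝ H]
  {P : Measure Ω} {V : Ω → H} {Γ : H →L[ℝ] H}

theorem IsCovOp.isSymmetric (hΓ : IsCovOp P V Γ) : (Γ : H →ₗ[ℝ] H).IsSymmetric := fun u v => by
  rw [ContinuousLinearMap.coe_coe, ← real_inner_comm u (Γ v), hΓ, hΓ]
  simp only [mul_comm]

variable [CompleteSpace H]

theorem IsCovOp.inner_apply_eq_integral (hΓ : IsCovOp P V Γ) (hint : Integrable V P) {μ0 : H}
    (hmean : ∫ ω, V ω ∂P = μ0) (u v : H) :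
    ⟪Γ u, v⟫ = ∫ ω, (⟪u, V ω⟫ - ⟪u, μ0⟫) * (⟪v, V ω⟫ - ⟪v, μ0⟫) ∂P := by
  rw [hΓ, integral_inner hint, integral_inner hint, hmean]

variable {μ0 : H} {ι : Type*} {b : ι → H} {lam : ι → ℝ}

theorem IsCovOp.covMatrix_inner_eq_diagonal [DecidableEq ι] (hΓ : IsCovOp P V Γ)
    (hint : Integrable V P) (hmean : ∫ ω, V ω ∂P = μ0) (hb : Orthonormal ℝ b)
    (heig : ∀ i, Γ (b i) = lam i • b i) :
    Matrix.of (fun i j => ∫ ω, (⟪b i, V ω⟫ - ⟪b i, μ0⟫) * (⟪b j, V ω⟫ - ⟪b j, μ0⟫) ∂P)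
      = Matrix.diagonal lam := by
  ext i j
  rw [Matrix.of_apply, ← hΓ.inner_apply_eq_integral hint hmean, heig, real_inner_smul_left,
    orthonormal_iff_ite.mp hb, Matrix.diagonal_apply]
  split_ifs <;> simp

theorem IsCovOp.integral_inner_coordResidual_mul_inner_coordCLM_eq_zero [Fintype ι]
    (hΓ : IsCovOp P V Γ) (hint : Integrable V P) (hmean : ∫ ω, V ω ∂P = μ0)
    (hb : Orthonormal ℝ b) (heig : ∀ i, Γ (b i) = lam i • b i) (c : H) (x : EuclideanSpace ℝ ι) :
    ∫ ω, (⟪c, coordResidual b (V ω)⟫ - ⟪c, coordResidual b μ0⟫)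
      * (⟪x, coordCLM b (V ω)⟫ - ⟪x, coordCLM b μ0⟫) ∂P = 0 := by
  simp only [inner_coordResidual_comm b c, ← ContinuousLinearMap.adjoint_inner_left,
    ← hΓ.inner_apply_eq_integral hint hmean, adjoint_coordCLM_apply, inner_sum,
    real_inner_smul_right]
  refine Finset.sum_eq_zero fun i _ => ?_
  rw [← ContinuousLinearMap.coe_coe, hΓ.isSymmetric, ContinuousLinearMap.coe_coe, heig,
    real_inner_smul_right, real_inner_comm, hb.inner_coordResidual, mul_zero, mul_zero]

end Covariance

theorem elliptical_conditional_expectation_general {H : Type*}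
    [NormedAddCommGroup H] [InnerProductSpace ℝ H] [CompleteSpace H]
    [MeasurableSpace H] [BorelSpace H]
    (P : Measure Ω) [IsProbabilityMeasure P]
    (V : Ω → H) (μ0 : H) (Γ : H →L[ℝ] H)
    (hmeas : Measurable V)
    (hV : IsElliptical P V μ0 Γ)
    (hIntV : Integrable V P) (hmean : ∫ ω, V ω ∂P = μ0)
    -- `Γ` is the covariance operator of `V`
    (hGcov : IsCovOp P V Γ)
    -- orthonormal eigenfunctions `φ` of `Γ` with decreasing eigenvalues `lam`
    (φ : ℕ → H) (lam : ℕ → ℝ)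
    (hON : Orthonormal ℝ φ)
    (heig : ∀ n, Γ (φ n) = lam n • φ n)
    (hdec : Antitone lam)
    (d : ℕ) (hpos : 0 < lam (d - 1))
    -- the finite-dimensional projection `W₁` and the orthogonal part `V₂`
    (W₁ : Ω → EuclideanSpace ℝ (Fin d))
    (hW₁ : ∀ ω, W₁ ω = fun i : Fin d => (⟪φ (i : ℕ), V ω⟫ : ℝ))
    (V₂ : Ω → H)
    (hV₂ : ∀ ω, V₂ ω = V ω - ∑ i : Fin d, (⟪φ (i : ℕ), V ω⟫ : ℝ) • φ (i : ℕ))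
    (μ₁ : EuclideanSpace ℝ (Fin d)) (hμ₁ : μ₁ = fun i : Fin d => (⟪φ (i : ℕ), μ0⟫ : ℝ))
    (μ₂ : H) (hμ₂ : μ₂ = μ0 - ∑ i : Fin d, (⟪φ (i : ℕ), μ0⟫ : ℝ) • φ (i : ℕ))
    -- cross-covariance operator between `V₂` and `W₁`
    (Γcross : EuclideanSpace ℝ (Fin d) →L[ℝ] H)
    (hcross : ∀ (x : EuclideanSpace ℝ (Fin d)) (h : H),
      (⟪Γcross x, h⟫ : ℝ)
        = ∫ ω, ((⟪h, V₂ ω⟫ : ℝ) - (⟪h, μ₂⟫ : ℝ)) * ((⟪x, W₁ ω⟫ : ℝ) - (⟪x, μ₁⟫ : ℝ)) ∂P) :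
    -- (a) the covariance matrix of `W₁` is `diag(λ₁,…,λ_d)`, which is nonsingular
    ((Matrix.of fun i j : Fin d =>
        ∫ ω, (W₁ ω i - μ₁ i) * (W₁ ω j - μ₁ j) ∂P)
      = Matrix.diagonal (fun i : Fin d => lam (i : ℕ)) ∧
      IsUnit (Matrix.of fun i j : Fin d =>
        ∫ ω, (W₁ ω i - μ₁ i) * (W₁ ω j - μ₁ j) ∂P).det) ∧
    -- (b) `E(V₂ | W₁) = μ₂ + Γ_{V₂,W₁} Σ_{W₁}⁻¹ (W₁ − μ₁)` (here `Σ_{W₁}⁻¹` is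
    -- coordinatewise division by the eigenvalues, since `Σ_{W₁}` is diagonal)
    (P[V₂ | MeasurableSpace.comap W₁ inferInstance]
      =ᵐ[P] fun ω => μ₂ + Γcross (WithLp.toLp 2 (fun i : Fin d => (W₁ ω i - μ₁ i) / lam (i : ℕ)))) := by
  set b : Fin d → H := fun i => φ i
  have hb : Orthonormal ℝ b := hON.comp _ Fin.val_injective
  have hW : W₁ = fun ω => coordCLM b (V ω) := funext fun ω => by ext i; simp [hW₁, b]
  have hμ : μ₁ = coordCLM b μ0 := by ext i; simp [hμ₁, b]
  have hV₂' : V₂ = fun ω => coordResidual b (V ω) := funext hV₂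
  have hμ₂' : μ₂ = coordResidual b μ0 := hμ₂
  subst hW hμ hV₂' hμ₂'
  have hlam (i : Fin d) : 0 < lam i := hpos.trans_le (hdec (Nat.le_pred_of_lt i.isLt))
  have hΓcross : Γcross = 0 := ContinuousLinearMap.ext fun x => ext_inner_right ℝ fun c => by
    rw [hcross, hGcov.integral_inner_coordResidual_mul_inner_coordCLM_eq_zero hIntV hmean hb
      (fun i => heig i), _root_.zero_apply, inner_zero_left]
  refine ⟨?_, ?_⟩
  · have hcov := hGcov.covMatrix_inner_eq_diagonal hIntV hmean hb (fun i => heig i)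
    simp only [coordCLM_apply] at hcov ⊢
    rw [hcov, Matrix.det_diagonal]
    exact ⟨rfl, (Finset.prod_pos fun i _ => hlam i).ne'.isUnit⟩
  · simpa [hΓcross] using hV.condExp_coordResidual_ae_eq hmeas hIntV hGcov.isSymmetric hb
      (fun i => heig i)

/-- Theorem on splitting an elliptical element: `W₁ = T_d V` has covariance matrix
`diag(λ₁,…,λ_d)` (nonsingular), and `E(V₂ | W₁) = μ₂ + Γ_{V₂,W₁} Σ_{W₁}⁻¹ (W₁ - μ₁)`. -/
theorem elliptical_conditional_expectation {H : Type*}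
    [NormedAddCommGroup H] [InnerProductSpace ℝ H] [CompleteSpace H]
    [SecondCountableTopology H] [MeasurableSpace H] [BorelSpace H]
    (P : Measure Ω) [IsProbabilityMeasure P]
    (V : Ω → H) (μ0 : H) (Γ : H →L[ℝ] H)
    (hmeas : Measurable V)
    (hV : IsElliptical P V μ0 Γ)
    (hm2 : Integrable (fun ω => ‖V ω‖ ^ 2) P)
    (hIntV : Integrable V P) (hmean : ∫ ω, V ω ∂P = μ0)
    -- `Γ` is the covariance operator of `V`
    (hGcov : IsCovOp P V Γ)
    -- orthonormal eigenfunctions `φ` of `Γ` with decreasing eigenvalues `lam`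
    (φ : ℕ → H) (lam : ℕ → ℝ)
    (hON : Orthonormal ℝ φ)
    (heig : ∀ n, Γ (φ n) = lam n • φ n)
    (hdec : Antitone lam)
    (hHS : Summable lam)
    (d : ℕ) (hd : 0 < d) (hpos : 0 < lam (d - 1))
    -- the finite-dimensional projection `W₁` and the orthogonal part `V₂`
    (W₁ : Ω → EuclideanSpace ℝ (Fin d))
    (hW₁ : ∀ ω, W₁ ω = fun i : Fin d => (⟪φ (i : ℕ), V ω⟫ : ℝ))
    (V₂ : Ω → H)
    (hV₂ : ∀ ω, V₂ ω = V ω - ∑ i : Fin d, (⟪φ (i : ℕ), V ω⟫ : ℝ) • φ (i : ℕ))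
    (μ₁ : EuclideanSpace ℝ (Fin d)) (hμ₁ : μ₁ = fun i : Fin d => (⟪φ (i : ℕ), μ0⟫ : ℝ))
    (μ₂ : H) (hμ₂ : μ₂ = μ0 - ∑ i : Fin d, (⟪φ (i : ℕ), μ0⟫ : ℝ) • φ (i : ℕ))
    -- cross-covariance operator between `V₂` and `W₁`
    (Γcross : EuclideanSpace ℝ (Fin d) →L[ℝ] H)
    (hcross : ∀ (x : EuclideanSpace ℝ (Fin d)) (h : H),
      (⟪Γcross x, h⟫ : ℝ)
        = ∫ ω, ((⟪h, V₂ ω⟫ : ℝ) - (⟪h, μ₂⟫ : ℝ)) * ((⟪x, W₁ ω⟫ : ℝ) - (⟪x, μ₁⟫ : ℝ)) ∂P) :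
    -- (a) the covariance matrix of `W₁` is `diag(λ₁,…,λ_d)`, which is nonsingular
    ((Matrix.of fun i j : Fin d =>
        ∫ ω, (W₁ ω i - μ₁ i) * (W₁ ω j - μ₁ j) ∂P)
      = Matrix.diagonal (fun i : Fin d => lam (i : ℕ)) ∧
      IsUnit (Matrix.of fun i j : Fin d =>
        ∫ ω, (W₁ ω i - μ₁ i) * (W₁ ω j - μ₁ j) ∂P).det) ∧
    -- (b) `E(V₂ | W₁) = μ₂ + Γ_{V₂,W₁} Σ_{W₁}⁻¹ (W₁ − μ₁)` (here `Σ_{W₁}⁻¹` is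
    -- coordinatewise division by the eigenvalues, since `Σ_{W₁}` is diagonal)
    (P[V₂ | MeasurableSpace.comap W₁ inferInstance]
      =ᵐ[P] fun ω => μ₂ + Γcross (WithLp.toLp 2 (fun i : Fin d => (W₁ ω i - μ₁ i) / lam (i : ℕ)))) :=
  elliptical_conditional_expectation_general P V μ0 Γ hmeas hV hIntV hmean hGcov φ lam hON heig hdec
    d hpos W₁ hW₁ V₂ hV₂ μ₁ hμ₁ μ₂ hμ₂ Γcross hcross
end
end

section
/- Let V be a random element in a separable Hilbert space H with finite second moment. If {ξ₁, ..., ξ_k} is a set of k principal points of V, then {ξ₁, ..., ξ_k} is self-consistent for V. -/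
open MeasureTheory ProbabilityTheory
open scoped RealInnerProductSpace

noncomputable section

variable {Ω : Type*} [MeasurableSpace Ω]

/-! Replacing `ξ j` by an arbitrary point `p` yields a competitor that is no worse than `ξ`
outside the domain of attraction `D_j` (there a nearest point of index `≠ j` survives) and
costs at most `‖V - p‖` on `D_j`. Principality therefore makes `ξ j` a minimizer of
`p ↦ E(‖V - p‖²; V ∈ D_j)`, and expanding the square around a minimizer shows that the minimizer
of a mean squared deviation is the mean. -/

open Set Function

section SquaredDeviation

variable {α E : Type*} [MeasurableSpace α] {μ : Measure α} [IsFiniteMeasure μ]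

lemma MeasureTheory.MemLp.integrable_norm_sub_sq [NormedAddCommGroup E] {X : α → E}
    (hX : MemLp X 2 μ) (c : E) : Integrable (fun a => ‖X a - c‖ ^ 2) μ :=
  (memLp_two_iff_integrable_sq_norm (hX.1.sub aestronglyMeasurable_const)).1
    (hX.sub (memLp_const c))

variable [NormedAddCommGroup E] [InnerProductSpace ℝ E] [CompleteSpace E] {X : α → E}

lemma integral_norm_sub_add_sq (hX : MemLp X 2 μ) (c v : E) :
    ∫ a, ‖X a - (c + v)‖ ^ 2 ∂μ
      = ∫ a, ‖X a - c‖ ^ 2 ∂μ - 2 * ⟪v, ∫ a, (X a - c) ∂μ⟫ + μ.real univ * ‖v‖ ^ 2 := by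
  have hXc : Integrable (fun a => X a - c) μ :=
    (hX.integrable one_le_two).sub (integrable_const c)
  have hexpand : ∀ a, ‖X a - (c + v)‖ ^ 2 = ‖X a - c‖ ^ 2 - 2 * ⟪v, X a - c⟫ + ‖v‖ ^ 2 :=
    fun a => by rw [← sub_sub, norm_sub_sq_real, real_inner_comm]
  have hsq := hX.integrable_norm_sub_sq c
  have hinner : Integrable (fun a => 2 * ⟪v, X a - c⟫) μ := (hXc.const_inner v).const_mul 2
  have hdiff : Integrable (fun a => ‖X a - c‖ ^ 2 - 2 * ⟪v, X a - c⟫) μ := hsq.sub hinner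
  simp_rw [hexpand]
  rw [integral_add hdiff (integrable_const _), integral_sub hsq hinner,
    integral_const_mul, integral_inner hXc, integral_const, smul_eq_mul]

lemma integral_eq_measureReal_smul_of_isMinOn (hX : MemLp X 2 μ) {c : E}
    (hc : IsMinOn (fun y => ∫ a, ‖X a - y‖ ^ 2 ∂μ) univ c) :
    ∫ a, X a ∂μ = μ.real univ • c := by
  rcases eq_or_ne (μ.real univ) 0 with hM | hM
  · rw [measureReal_eq_zero_iff, Measure.measure_univ_eq_zero] at hM
    simp [hM]
  have hpos : 0 < μ.real univ := measureReal_nonneg.lt_of_ne hM.symm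
  -- compare with the mean `c + M⁻¹ • ∫ (X - c)`, where `M` is the total mass
  have hmin := isMinOn_univ_iff.1 hc (c + (μ.real univ)⁻¹ • ∫ a, (X a - c) ∂μ)
  rw [integral_norm_sub_add_sq hX, real_inner_smul_left,
    real_inner_self_eq_norm_sq, norm_smul, mul_pow, Real.norm_eq_abs, sq_abs] at hmin
  have hm : ‖∫ a, (X a - c) ∂μ‖ = 0 := by
    field_simp at hmin
    nlinarith [norm_nonneg (∫ a, (X a - c) ∂μ)]
  rwa [norm_eq_zero, integral_sub (hX.integrable one_le_two) (integrable_const c), integral_const,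
    sub_eq_zero] at hm

end SquaredDeviation

section NearestPoint

variable {E : Type*} [NormedAddCommGroup E] {k : ℕ} {x : E} {y : Fin k → E} {j : Fin k}

lemma iInf_norm_sub_le (x : E) (y : Fin k → E) (j : Fin k) : ⨅ ℓ, ‖x - y ℓ‖ ≤ ‖x - y j‖ :=
  ciInf_le (finite_range _).bddBelow j

lemma iInf_norm_sub_eq_of_mem_attractionDomain (hx : x ∈ attractionDomain y j) :
    ⨅ ℓ, ‖x - y ℓ‖ = ‖x - y j‖ :=
  have : Nonempty (Fin k) := ⟨j⟩
  le_antisymm (iInf_norm_sub_le x y j) (le_ciInf hx.1)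

lemma exists_ne_norm_sub_le_iInf_of_notMem_attractionDomain (hx : x ∉ attractionDomain y j) :
    ∃ ℓ ≠ j, ‖x - y ℓ‖ ≤ ⨅ i, ‖x - y i‖ := by
  have : Nonempty (Fin k) := ⟨j⟩
  obtain ⟨ℓ, hℓ⟩ := Finite.exists_min fun i => ‖x - y i‖
  have hinf : ⨅ i, ‖x - y i‖ = ‖x - y ℓ‖ := le_antisymm (iInf_norm_sub_le x y ℓ) (le_ciInf hℓ)
  rw [hinf]
  rcases eq_or_ne ℓ j with rfl | hne
  · -- `x` is closest to `y ℓ`, so it can only miss `D_ℓ` through a tie with a lower index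
    simp only [attractionDomain, mem_ofPred_eq, not_and, not_forall, not_lt] at hx
    obtain ⟨i, hlt, hle⟩ := hx hℓ
    exact ⟨i, hlt.ne, hle⟩
  · exact ⟨ℓ, hne, le_rfl⟩

lemma iInf_norm_sub_update_le_of_notMem_attractionDomain (hx : x ∉ attractionDomain y j)
    (p : E) : ⨅ ℓ, ‖x - update y j p ℓ‖ ≤ ⨅ ℓ, ‖x - y ℓ‖ := by
  obtain ⟨ℓ, hne, hle⟩ := exists_ne_norm_sub_le_iInf_of_notMem_attractionDomain hx
  calc ⨅ i, ‖x - update y j p i‖ ≤ ‖x - update y j p ℓ‖ := iInf_norm_sub_le _ _ ℓ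
    _ = ‖x - y ℓ‖ := by rw [update_of_ne hne]
    _ ≤ _ := hle

lemma measurableSet_attractionDomain [MeasurableSpace E] [OpensMeasurableSpace E]
    (y : Fin k → E) (j : Fin k) : MeasurableSet (attractionDomain y j) := by
  have hdist : ∀ i, Measurable fun x : E => ‖x - y i‖ :=
    fun i => (continuous_id.sub continuous_const).norm.measurable
  have hset : attractionDomain y j = (⋂ ℓ, {x | ‖x - y j‖ ≤ ‖x - y ℓ‖}) ∩
      ⋂ ℓ, ⋂ (_ : ℓ < j), {x | ‖x - y j‖ < ‖x - y ℓ‖} := by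
    ext x
    simp [attractionDomain]
  rw [hset]
  exact (MeasurableSet.iInter fun ℓ => measurableSet_le (hdist j) (hdist ℓ)).inter
    (MeasurableSet.iInter fun ℓ => MeasurableSet.iInter fun _ =>
      measurableSet_lt (hdist j) (hdist ℓ))

end NearestPoint

section PrincipalPoints

variable {H : Type*} [NormedAddCommGroup H] {k : ℕ} {P : Measure Ω} [IsFiniteMeasure P]
  {V : Ω → H}

lemma MeasureTheory.MemLp.integrable_iInf_norm_sub_sq (hV : MemLp V 2 P) (y : Fin k → H) :
    Integrable (fun ω => (⨅ ℓ, ‖V ω - y ℓ‖) ^ 2) P := by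
  rcases isEmpty_or_nonempty (Fin k) with _ | ⟨⟨j⟩⟩
  · simp
  refine (hV.integrable_norm_sub_sq (y j)).mono' ?_ (.of_forall fun ω => ?_)
  · exact ((AEMeasurable.iInf fun ℓ =>
      (hV.1.sub aestronglyMeasurable_const).norm.aemeasurable).pow_const 2).aestronglyMeasurable
  · rw [Real.norm_of_nonneg (by positivity)]
    exact pow_le_pow_left₀ (Real.iInf_nonneg fun _ => norm_nonneg _) (iInf_norm_sub_le _ y j) 2

theorem IsPrincipal.isMinOn_setIntegral [MeasurableSpace H] [OpensMeasurableSpace H]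
    {ξ : Fin k → H} (hpp : IsPrincipal P V ξ) (hmeas : Measurable V) (hV : MemLp V 2 P)
    (j : Fin k) :
    IsMinOn (fun p => ∫ ω in V ⁻¹' attractionDomain ξ j, ‖V ω - p‖ ^ 2 ∂P) univ (ξ j) := by
  refine isMinOn_univ_iff.2 fun p => ?_
  set A := V ⁻¹' attractionDomain ξ j
  set z := update ξ j p
  have hA : MeasurableSet A := hmeas (measurableSet_attractionDomain ξ j)
  have hsplit_ξ : ∫ ω, (⨅ ℓ, ‖V ω - ξ ℓ‖) ^ 2 ∂P
      = ∫ ω in A, ‖V ω - ξ j‖ ^ 2 ∂P + ∫ ω in Aᶜ, (⨅ ℓ, ‖V ω - ξ ℓ‖) ^ 2 ∂P := by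
    rw [← integral_add_compl hA (hV.integrable_iInf_norm_sub_sq ξ)]
    congr 1
    exact setIntegral_congr_fun hA fun ω hω => by
      rw [iInf_norm_sub_eq_of_mem_attractionDomain hω]
  have hsplit_z : ∫ ω, (⨅ ℓ, ‖V ω - z ℓ‖) ^ 2 ∂P
      ≤ ∫ ω in A, ‖V ω - p‖ ^ 2 ∂P + ∫ ω in Aᶜ, (⨅ ℓ, ‖V ω - ξ ℓ‖) ^ 2 ∂P := by
    have hz := hV.integrable_iInf_norm_sub_sq z
    rw [← integral_add_compl hA hz]
    refine add_le_add (setIntegral_mono_on hz.integrableOn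
      (hV.integrable_norm_sub_sq p).integrableOn hA fun ω _ => ?_)
      (setIntegral_mono_on hz.integrableOn (hV.integrable_iInf_norm_sub_sq ξ).integrableOn
        hA.compl fun ω hω => ?_)
    · simpa [z] using pow_le_pow_left₀ (Real.iInf_nonneg fun _ => norm_nonneg _)
        (iInf_norm_sub_le (V ω) z j) 2
    · exact pow_le_pow_left₀ (Real.iInf_nonneg fun _ => norm_nonneg _)
        (iInf_norm_sub_update_le_of_notMem_attractionDomain hω p) 2
  linarith [hpp z]

end PrincipalPoints

/-- Principal points of a random element with finite second moment are self-consistent. -/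
theorem selfConsistent_of_isPrincipal {H : Type*}
    [NormedAddCommGroup H] [InnerProductSpace ℝ H] [CompleteSpace H]
    [SecondCountableTopology H] [MeasurableSpace H] [BorelSpace H]
    (P : Measure Ω) [IsProbabilityMeasure P]
    (V : Ω → H) (hmeas : Measurable V)
    (hm2 : Integrable (fun ω => ‖V ω‖ ^ 2) P)
    {k : ℕ} (ξ : Fin k → H)
    (hpp : IsPrincipal P V ξ) :
    SelfConsistent P V ξ := by
  intro j
  have hV : MemLp V 2 P := (memLp_two_iff_integrable_sq_norm hmeas.aestronglyMeasurable).2 hm2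
  have hmean := integral_eq_measureReal_smul_of_isMinOn (hV.restrict _)
    (hpp.isMinOn_setIntegral hmeas hV j)
  rwa [measureReal_restrict_apply_univ] at hmean
end
end

section
/- Let V be a random element of a separable Hilbert space H with finite second moment and V₂ = ν + ρ·UV with ν ∈ H, ρ a scalar, and U : H → H unitary. If {y₁,...,y_k} is a set of k principal points of V, then {ν + ρUy₁, ..., ν + ρUy_k} is a set of k principal points of V₂, and E(d²(V₂, {ν + ρUy_j}_j)) = ρ² E(d²(V, {y_j}_j)). -/
open MeasureTheory ProbabilityTheory
open scoped RealInnerProductSpace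

noncomputable section

variable {Ω : Type*} [MeasurableSpace Ω]

/-!
The map `x ↦ ν + ρ • U x` multiplies all distances by `|ρ|`, so it multiplies the mean squared
distance to any `k` points by `ρ²`. For `ρ ≠ 0` it is a bijection, so every competitor set for
`V₂` is the image of a competitor set for `V`, and minimality transfers; for `ρ = 0` the image
points achieve mean squared distance `0`, which is trivially minimal.
-/

def meanSqDist {E : Type*} [NormedAddCommGroup E] {k : ℕ}
    (P : Measure Ω) (V : Ω → E) (y : Fin k → E) : ℝ :=
  ∫ ω, (⨅ j, ‖V ω - y j‖) ^ 2 ∂P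

section AffineIsometry

variable {E F : Type*} [NormedAddCommGroup E] [NormedSpace ℝ E]
  [NormedAddCommGroup F] [NormedSpace ℝ F]

theorem norm_affine_isometry_sub (ν : F) (ρ : ℝ) (U : E →ₗᵢ[ℝ] F) (x c : E) :
    ‖(ν + ρ • U x) - (ν + ρ • U c)‖ = |ρ| * ‖x - c‖ := by
  rw [add_sub_add_left_eq_sub, ← smul_sub, ← map_sub, norm_smul, U.norm_map, Real.norm_eq_abs]

theorem iInf_norm_affine_isometry_sub_sq {k : ℕ} (ν : F) (ρ : ℝ) (U : E →ₗᵢ[ℝ] F)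
    (x : E) (c : Fin k → E) :
    (⨅ j, ‖(ν + ρ • U x) - (ν + ρ • U (c j))‖) ^ 2 = ρ ^ 2 * (⨅ j, ‖x - c j‖) ^ 2 := by
  simp_rw [norm_affine_isometry_sub, ← Real.mul_iInf_of_nonneg (abs_nonneg ρ), mul_pow, sq_abs]

theorem meanSqDist_affine_isometry {k : ℕ} (P : Measure Ω) (V : Ω → E) (ν : F) (ρ : ℝ)
    (U : E →ₗᵢ[ℝ] F) (c : Fin k → E) :
    meanSqDist P (fun ω => ν + ρ • U (V ω)) (fun j => ν + ρ • U (c j))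
      = ρ ^ 2 * meanSqDist P V c := by
  simp_rw [meanSqDist, iInf_norm_affine_isometry_sub_sq, integral_const_mul]

theorem exists_affine_isometryEquiv_eq {k : ℕ} (ν : F) {ρ : ℝ} (hρ : ρ ≠ 0)
    (U : E ≃ₗᵢ[ℝ] F) (z : Fin k → F) :
    ∃ w : Fin k → E, z = fun j => ν + ρ • U (w j) :=
  ⟨fun j => U.symm (ρ⁻¹ • (z j - ν)), by
    ext j
    simp [smul_smul, mul_inv_cancel₀ hρ]⟩

end AffineIsometry

theorem isPrincipal_affine_unitary_general {H : Type*}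
    [NormedAddCommGroup H] [InnerProductSpace ℝ H]
    (P : Measure Ω)
    (V : Ω → H)
    (ν : H) (ρ : ℝ) (U : H ≃ₗᵢ[ℝ] H)
    {k : ℕ} (y : Fin k → H)
    (hpp : IsPrincipal P V y) :
    IsPrincipal P (fun ω => ν + ρ • U (V ω)) (fun j => ν + ρ • U (y j)) ∧
      (∫ ω, (⨅ j, ‖(ν + ρ • U (V ω)) - (ν + ρ • U (y j))‖) ^ 2 ∂P)
        = ρ ^ 2 * ∫ ω, (⨅ j, ‖V ω - y j‖) ^ 2 ∂P := by
  have hscale : ∀ c : Fin k → H,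
      meanSqDist P (fun ω => ν + ρ • U (V ω)) (fun j => ν + ρ • U (c j))
        = ρ ^ 2 * meanSqDist P V c :=
    meanSqDist_affine_isometry P V ν ρ U.toLinearIsometry
  refine ⟨fun z => ?_, hscale y⟩
  change meanSqDist P _ _ ≤ meanSqDist P _ z
  rcases eq_or_ne ρ 0 with hρ | hρ
  · rw [hscale, hρ, zero_pow two_ne_zero, zero_mul]
    exact integral_nonneg fun ω => sq_nonneg _
  · obtain ⟨w, rfl⟩ := exists_affine_isometryEquiv_eq ν hρ U z
    rw [hscale, hscale]
    exact mul_le_mul_of_nonneg_left (hpp w) (sq_nonneg ρ)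

/-- Principal points transform under `V₂ = ν + ρ • U V` with `U` unitary, and the minimal
expected squared distance scales by `ρ²`. -/
theorem isPrincipal_affine_unitary {H : Type*}
    [NormedAddCommGroup H] [InnerProductSpace ℝ H] [CompleteSpace H]
    [SecondCountableTopology H]
    (P : Measure Ω) [IsProbabilityMeasure P]
    (V : Ω → H) (hm2 : Integrable (fun ω => ‖V ω‖ ^ 2) P)
    (ν : H) (ρ : ℝ) (U : H ≃ₗᵢ[ℝ] H)
    {k : ℕ} (y : Fin k → H)
    (hpp : IsPrincipal P V y) :
    IsPrincipal P (fun ω => ν + ρ • U (V ω)) (fun j => ν + ρ • U (y j)) ∧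
      (∫ ω, (⨅ j, ‖(ν + ρ • U (V ω)) - (ν + ρ • U (y j))‖) ^ 2 ∂P)
        = ρ ^ 2 * ∫ ω, (⨅ j, ‖V ω - y j‖) ^ 2 ∂P :=
  isPrincipal_affine_unitary_general P V ν ρ U y hpp
end
end
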